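/- Let 0 < p ≤ 1, let X be a p-Banach space over 𝔽 = ℝ, and let 𝒳 be a basis of X that is C_pgu-URGPCC. Then 𝒳 is unconditional with unconditionality constant K ≤ C_pgu². -/

import Mathlib

open scoped BigOperators

noncomputable section

/-- A basis of a `p`-Banach space over `𝕜` (`𝕜 = ℝ` or `ℂ`), bundled with the `p`-norm
`N`, the basis vectors `e`, and the biorthogonal functionals `coord`. -/
structure PBasis (𝕜 : Type*) [RCLike 𝕜] (X : Type*) [AddCommGroup X] [Module 𝕜 X]
    (p : ℝ) : Type _ where
  /-- the `p`-norm of the space -/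
  N : X → ℝ
  N_nonneg : ∀ f : X, 0 ≤ N f
  N_eq_zero_iff : ∀ f : X, N f = 0 ↔ f = 0
  N_smul : ∀ (t : 𝕜) (f : X), N (t • f) = ‖t‖ * N f
  N_padd : ∀ f g : X, N (f + g) ^ p ≤ N f ^ p + N g ^ p
  /-- completeness with respect to the `p`-norm -/
  complete : ∀ u : ℕ → X,
      (∀ ε : ℝ, 0 < ε → ∃ n₀ : ℕ, ∀ m n : ℕ, n₀ ≤ m → n₀ ≤ n → N (u m - u n) < ε) →
      ∃ f : X, ∀ ε : ℝ, 0 < ε → ∃ n₀ : ℕ, ∀ n : ℕ, n₀ ≤ n → N (u n - f) < ε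
  /-- the basis vectors -/
  e : ℕ → X
  /-- the biorthogonal functionals -/
  coord : ℕ → X →ₗ[𝕜] 𝕜
  biorth : ∀ n m : ℕ, coord n (e m) = if n = m then (1 : 𝕜) else 0
  /-- the closed linear span of the basis vectors is the whole space -/
  dense_span : ∀ f : X, ∀ ε : ℝ, 0 < ε →
      ∃ g ∈ Submodule.span 𝕜 (Set.range e), N (f - g) < ε
  e_bdd : ∃ c : ℝ, ∀ n : ℕ, N (e n) ≤ c
  coord_bdd : ∃ c : ℝ, ∀ (n : ℕ) (f : X), ‖coord n f‖ ≤ c * N f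

namespace PBasis

variable {𝕜 : Type*} [RCLike 𝕜] {X : Type*} [AddCommGroup X] [Module 𝕜 X] {p : ℝ}

/-- The projection `P_A f = ∑_{n ∈ A} x_n^*(f) x_n`. -/
def proj (bs : PBasis 𝕜 X p) (A : Finset ℕ) (f : X) : X :=
  ∑ n ∈ A, bs.coord n f • bs.e n

/-- The support of `f`. -/
def supp (bs : PBasis 𝕜 X p) (f : X) : Set ℕ := {n | bs.coord n f ≠ 0}

/-- `A` is a greedy set of `f`: `min_{n ∈ A} |x_n^*(f)| ≥ max_{m ∉ A} |x_m^*(f)|`. -/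
def IsGreedySet (bs : PBasis 𝕜 X p) (f : X) (A : Finset ℕ) : Prop :=
  ∀ n ∈ A, ∀ m : ℕ, m ∉ A → ‖bs.coord m f‖ ≤ ‖bs.coord n f‖

/-- `𝟙_{ε,A} = ∑_{j ∈ A} ε_j x_j`. -/
def indSign (bs : PBasis 𝕜 X p) (ε : ℕ → 𝕜) (A : Finset ℕ) : X :=
  ∑ j ∈ A, ε j • bs.e j

/-- `𝟙_A = ∑_{j ∈ A} x_j`. -/
def ind (bs : PBasis 𝕜 X p) (A : Finset ℕ) : X := ∑ j ∈ A, bs.e j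

/-- `ε` is a sign on `A`. -/
def IsSign (ε : ℕ → 𝕜) (A : Finset ℕ) : Prop := ∀ j ∈ A, ‖ε j‖ = 1

/-- `min_{n ∈ A} |x_n^*(f)|`. -/
def minCoef (bs : PBasis 𝕜 X p) (f : X) (A : Finset ℕ) : ℝ :=
  sInf ((fun n => ‖bs.coord n f‖) '' (A : Set ℕ))

/-- `‖f − P_A(f)‖ ≤ C·σ_m(f)` for every greedy set `A` of cardinality `m`. -/
def IsGreedyWith (bs : PBasis 𝕜 X p) (C : ℝ) : Prop :=
  ∀ (f : X) (A B : Finset ℕ) (a : ℕ → 𝕜), bs.IsGreedySet f A → B.card ≤ A.card →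
    bs.N (f - bs.proj A f) ≤ C * bs.N (f - ∑ j ∈ B, a j • bs.e j)

/-- `‖f − P_A(f)‖ ≤ C·ρ_m(f)` for every greedy set `A` of cardinality `m`, where
`ρ_m(f) = inf {‖f − α 𝟙_{ε,B}‖ : |B| = m, ε sign}` and `α = min_{n ∈ A} |x_n^*(f)|`. -/
def IsRGPCCWith (bs : PBasis 𝕜 X p) (C : ℝ) : Prop :=
  ∀ (f : X) (A B : Finset ℕ) (ε : ℕ → 𝕜), bs.IsGreedySet f A → B.card = A.card →
    IsSign ε B →
    bs.N (f - bs.proj A f) ≤ C * bs.N (f - ((bs.minCoef f A : ℝ) : 𝕜) • bs.indSign ε B)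

/-- `‖f − P_A(f)‖ ≤ C·ϱ_m(f)` for every greedy set `A` of cardinality `m`, where
`ϱ_m(f) = inf {‖f − α 𝟙_B‖ : |B| = m}` and `α = min_{n ∈ A} |x_n^*(f)|`. -/
def IsURGPCCWith (bs : PBasis 𝕜 X p) (C : ℝ) : Prop :=
  ∀ (f : X) (A B : Finset ℕ), bs.IsGreedySet f A → B.card = A.card →
    bs.N (f - bs.proj A f) ≤ C * bs.N (f - ((bs.minCoef f A : ℝ) : 𝕜) • bs.ind B)

/-- `K`-unconditionality. -/
def IsUncondWith (bs : PBasis 𝕜 X p) (K : ℝ) : Prop :=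
  ∀ (A : Finset ℕ) (f : X), bs.N (bs.proj A f) ≤ K * bs.N f

/-- `C`-quasi-greediness. -/
def IsQuasiGreedyWith (bs : PBasis 𝕜 X p) (C : ℝ) : Prop :=
  ∀ (f : X) (A : Finset ℕ), bs.IsGreedySet f A → bs.N (f - bs.proj A f) ≤ C * bs.N f

/-- `C`-almost-greediness. -/
def IsAlmostGreedyWith (bs : PBasis 𝕜 X p) (C : ℝ) : Prop :=
  ∀ (f : X) (A B : Finset ℕ), bs.IsGreedySet f A → B.card ≤ A.card →
    bs.N (f - bs.proj A f) ≤ C * bs.N (f - bs.proj B f)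

/-- `D`-democracy. -/
def IsDemocraticWith (bs : PBasis 𝕜 X p) (D : ℝ) : Prop :=
  ∀ A B : Finset ℕ, A.card ≤ B.card → bs.N (bs.ind A) ≤ D * bs.N (bs.ind B)

/-- `D`-superdemocracy. -/
def IsSuperdemocraticWith (bs : PBasis 𝕜 X p) (D : ℝ) : Prop :=
  ∀ (A B : Finset ℕ) (ε η : ℕ → 𝕜), A.card ≤ B.card → IsSign ε A → IsSign η B →
    bs.N (bs.indSign ε A) ≤ D * bs.N (bs.indSign η B)

/-- `A < B`, i.e. every element of `A` is smaller than every element of `B`. -/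
def FinsetBefore (A B : Finset ℕ) : Prop := ∀ a ∈ A, ∀ b ∈ B, a < b

open scoped Classical in
/-- `sgn z = z/|z|` (with the convention `sgn 0 = 1`). -/
def sgn (z : 𝕜) : 𝕜 := if z = 0 then 1 else z / ((‖z‖ : ℝ) : 𝕜)

end PBasis

/-!
Outside `A`, split the support of `f` into the indices `P` with nonnegative and `Q` with negative
coefficients, so that `P_A f = (I - P_Q)(I - P_P) f`. Each factor costs at most `C`: if the
coefficients of `f` on `H` are all nonnegative, pick `n₀ ∉ H` with `x_{n₀}^*(f) = 0` and
`t ≥ sup_n |x_n^*(f)|`; then `G = H ∪ {n₀}` is a greedy set of `z = f + t 𝟙_G` with minimal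
coefficient `t`, while `z - P_G z = f - P_H f` and `z - t 𝟙_G = f`. For finitely supported `f`
such an `n₀` exists, and since `P_A` is continuous for the metric `N (f - g) ^ p`, density of the
finitely supported vectors gives the general case.
-/

namespace PBasis

section General

variable {𝕜 : Type*} [RCLike 𝕜] {X : Type*} [AddCommGroup X] [Module 𝕜 X] {p : ℝ}
  (b : PBasis 𝕜 X p)

lemma N_zero : b.N 0 = 0 := (b.N_eq_zero_iff 0).mpr rfl

lemma N_neg (f : X) : b.N (-f) = b.N f := by
  simpa using b.N_smul (-1) f

lemma N_sub_comm (f g : X) : b.N (f - g) = b.N (g - f) := by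
  rw [← neg_sub, N_neg]

lemma rpow_N_le_add_sub (f g : X) : b.N f ^ p ≤ b.N g ^ p + b.N (f - g) ^ p := by
  simpa using b.N_padd g (f - g)

lemma rpow_N_sum_le (hp : 0 < p) {ι : Type*} (s : Finset ι) (g : ι → X) :
    b.N (∑ i ∈ s, g i) ^ p ≤ ∑ i ∈ s, b.N (g i) ^ p := by
  classical
  induction s using Finset.induction_on with
  | empty => simp [b.N_zero, Real.zero_rpow hp.ne']
  | insert a s ha ih =>
    rw [Finset.sum_insert ha, Finset.sum_insert ha]
    linarith [b.N_padd (g a) (∑ i ∈ s, g i)]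

lemma coord_proj (A : Finset ℕ) (f : X) (n : ℕ) :
    b.coord n (b.proj A f) = if n ∈ A then b.coord n f else 0 := by
  simp [proj, b.biorth]

lemma coord_ind (A : Finset ℕ) (n : ℕ) : b.coord n (b.ind A) = if n ∈ A then 1 else 0 := by
  simp [ind, b.biorth]

lemma proj_sub (A : Finset ℕ) (f g : X) : b.proj A (f - g) = b.proj A f - b.proj A g := by
  simp [proj, sub_smul]

lemma proj_neg (A : Finset ℕ) (f : X) : b.proj A (-f) = -b.proj A f := by
  simp [proj]

lemma proj_empty (f : X) : b.proj ∅ f = 0 := by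
  simp [proj]

lemma proj_proj (A B : Finset ℕ) (f : X) : b.proj B (b.proj A f) = b.proj (B ∩ A) f := by
  classical
  rw [proj]
  simp only [coord_proj, ite_smul, zero_smul, Finset.sum_ite_mem]
  rfl

lemma proj_add_smul_ind (G : Finset ℕ) (f : X) (t : 𝕜) :
    b.proj G (f + t • b.ind G) = b.proj G f + t • b.ind G := by
  simp only [proj, map_add, map_smul, coord_ind, add_smul, Finset.sum_add_distrib]
  rw [ind, Finset.smul_sum]
  exact congrArg _ (Finset.sum_congr rfl fun n hn => by simp [hn])

lemma coord_eq_zero_of_proj_eq_self {S : Finset ℕ} {f : X} (hf : b.proj S f = f) {n : ℕ}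
    (hn : n ∉ S) : b.coord n f = 0 := by
  simpa [hf, hn] using b.coord_proj S f n

lemma exists_proj_eq_self_of_mem_span {f : X} (hf : f ∈ Submodule.span 𝕜 (Set.range b.e)) :
    ∃ S : Finset ℕ, b.proj S f = f := by
  classical
  induction hf using Submodule.span_induction with
  | mem x hx =>
    obtain ⟨m, rfl⟩ := hx
    exact ⟨{m}, by simp [proj, b.biorth]⟩
  | zero => exact ⟨∅, b.proj_empty 0⟩
  | add x y _ _ hx hy =>
    obtain ⟨S, hS⟩ := hx
    obtain ⟨T, hT⟩ := hy
    refine ⟨S ∪ T, ?_⟩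
    have hxS : b.proj (S ∪ T) x = x := by
      rw [← hS, proj_proj, Finset.union_inter_cancel_left]
    have hyT : b.proj (S ∪ T) y = y := by
      rw [← hT, proj_proj, Finset.union_inter_cancel_right]
    simp only [proj, map_add, add_smul, Finset.sum_add_distrib] at hxS hyT ⊢
    rw [hxS, hyT]
  | smul r x _ hx =>
    obtain ⟨S, hS⟩ := hx
    refine ⟨S, ?_⟩
    simp only [proj, map_smul, smul_eq_mul, mul_smul, ← Finset.smul_sum] at hS ⊢
    rw [hS]

lemma exists_proj_eq_self_rpow_N_sub_lt (hp : 0 < p) (f : X) {δ : ℝ} (hδ : 0 < δ) :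
    ∃ g S, b.proj S g = g ∧ b.N (f - g) ^ p < δ := by
  obtain ⟨g, hg, hfg⟩ := b.dense_span f (δ ^ p⁻¹) (Real.rpow_pos_of_pos hδ _)
  obtain ⟨S, hS⟩ := b.exists_proj_eq_self_of_mem_span hg
  refine ⟨g, S, hS, ?_⟩
  calc b.N (f - g) ^ p < (δ ^ p⁻¹) ^ p := Real.rpow_lt_rpow (b.N_nonneg _) hfg hp
    _ = δ := Real.rpow_inv_rpow hδ.le hp.ne'

lemma exists_N_coord_smul_e_le : ∃ c, 0 ≤ c ∧ ∀ n f, b.N (b.coord n f • b.e n) ≤ c * b.N f := by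
  obtain ⟨c, hc⟩ := b.coord_bdd
  obtain ⟨c', hc'⟩ := b.e_bdd
  refine ⟨max c 0 * max c' 0, by positivity, fun n f => ?_⟩
  rw [b.N_smul]
  calc ‖b.coord n f‖ * b.N (b.e n) ≤ (max c 0 * b.N f) * max c' 0 :=
        mul_le_mul ((hc n f).trans (mul_le_mul_of_nonneg_right (le_max_left _ _) (b.N_nonneg f)))
          ((hc' n).trans (le_max_left _ _)) (b.N_nonneg _)
          (mul_nonneg (le_max_right _ _) (b.N_nonneg f))
    _ = max c 0 * max c' 0 * b.N f := by ring

lemma exists_rpow_N_proj_le (hp : 0 < p) (A : Finset ℕ) :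
    ∃ M, 0 ≤ M ∧ ∀ f, b.N (b.proj A f) ^ p ≤ M * b.N f ^ p := by
  obtain ⟨c, hc0, hc⟩ := b.exists_N_coord_smul_e_le
  refine ⟨A.card * c ^ p, by positivity, fun f => ?_⟩
  calc b.N (b.proj A f) ^ p ≤ ∑ n ∈ A, b.N (b.coord n f • b.e n) ^ p := b.rpow_N_sum_le hp _ _
    _ ≤ ∑ _n ∈ A, (c * b.N f) ^ p :=
        Finset.sum_le_sum fun n _ => Real.rpow_le_rpow (b.N_nonneg _) (hc n f) hp.le
    _ = A.card * c ^ p * b.N f ^ p := by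
        rw [Finset.sum_const, nsmul_eq_mul, Real.mul_rpow hc0 (b.N_nonneg f), mul_assoc]

lemma N_proj_le_of_forall_proj_eq_self (hp : 0 < p) {K : ℝ} (hK : 0 ≤ K) (A : Finset ℕ)
    (hfin : ∀ S g, b.proj S g = g → b.N (b.proj A g) ≤ K * b.N g) (f : X) :
    b.N (b.proj A f) ≤ K * b.N f := by
  obtain ⟨M, hM0, hM⟩ := b.exists_rpow_N_proj_le hp A
  have hKp : 0 ≤ K ^ p := Real.rpow_nonneg hK p
  rw [← Real.rpow_le_rpow_iff (b.N_nonneg _) (by positivity [b.N_nonneg f]) hp,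
    Real.mul_rpow hK (b.N_nonneg f)]
  refine le_of_forall_pos_le_add fun δ hδ => ?_
  set L := K ^ p + M
  obtain ⟨g, S, hS, hfg⟩ := b.exists_proj_eq_self_rpow_N_sub_lt hp f
    (div_pos hδ (by positivity : 0 < L + 1))
  have hg : b.N (b.proj A g) ^ p ≤ K ^ p * b.N g ^ p := by
    rw [← Real.mul_rpow hK (b.N_nonneg g)]
    exact Real.rpow_le_rpow (b.N_nonneg _) (hfin S g hS) hp.le
  have hgf : b.N g ^ p ≤ b.N f ^ p + b.N (f - g) ^ p := by
    simpa only [b.N_sub_comm g f] using b.rpow_N_le_add_sub g f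
  have hε : L * b.N (f - g) ^ p ≤ δ := by
    rw [lt_div_iff₀ (by positivity)] at hfg
    nlinarith [Real.rpow_nonneg (b.N_nonneg (f - g)) p]
  calc b.N (b.proj A f) ^ p
      ≤ b.N (b.proj A g) ^ p + b.N (b.proj A (f - g)) ^ p := by
        simpa [b.proj_sub] using b.rpow_N_le_add_sub (b.proj A f) (b.proj A g)
    _ ≤ K ^ p * (b.N f ^ p + b.N (f - g) ^ p) + M * b.N (f - g) ^ p := by
        gcongr
        · exact hg.trans (by gcongr)
        · exact hM _
    _ = K ^ p * b.N f ^ p + L * b.N (f - g) ^ p := by ring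
    _ ≤ K ^ p * b.N f ^ p + δ := by gcongr

end General

section Real

variable {X : Type*} [AddCommGroup X] [Module ℝ X] {p : ℝ} (b : PBasis ℝ X p) {C : ℝ}

lemma N_sub_proj_le_of_coord_nonneg (h : b.IsURGPCCWith C) {f : X} {H : Finset ℕ} {n₀ : ℕ}
    (hn₀ : n₀ ∉ H) (hf₀ : b.coord n₀ f = 0) (hH : ∀ n ∈ H, 0 ≤ b.coord n f) :
    b.N (f - b.proj H f) ≤ C * b.N f := by
  classical
  obtain ⟨c, hc⟩ := b.coord_bdd
  set t := c * b.N f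
  set G := insert n₀ H
  set z := f + t • b.ind G
  have hG : ∀ n ∈ G, 0 ≤ b.coord n f := by
    simpa [G, hf₀] using hH
  have hz : ∀ n, b.coord n z = b.coord n f + if n ∈ G then t else 0 := by
    simp [z, coord_ind]
  have hzG : ∀ n ∈ G, ‖b.coord n z‖ = b.coord n f + t := fun n hn => by
    rw [hz, if_pos hn, Real.norm_eq_abs,
      abs_of_nonneg (add_nonneg (hG n hn) ((norm_nonneg _).trans (hc n f)))]
  have hgreedy : b.IsGreedySet z G := fun n hn m hm => by
    rw [hzG n hn, hz, if_neg hm, add_zero]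
    linarith [hc m f, hG n hn]
  have hmin : b.minCoef z G = t := by
    refine IsLeast.csInf_eq ⟨⟨n₀, by simp [G], by simp [hzG n₀ (by simp [G]), hf₀]⟩, ?_⟩
    rintro _ ⟨n, hn, rfl⟩
    simpa [hzG n hn] using hG n hn
  have hproj : b.proj G f = b.proj H f := by
    simp [G, proj, Finset.sum_insert hn₀, hf₀]
  have key := h z G G hgreedy rfl
  have hzf : z - t • b.ind G = f := add_sub_cancel_right f _
  have hzH : z - (b.proj H f + t • b.ind G) = f - b.proj H f := by simp only [z]; abel
  rwa [hmin, b.proj_add_smul_ind, hproj, hzH, RCLike.ofReal_real_eq_id, id, hzf] at key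

lemma N_sub_proj_le_of_coord_nonpos (h : b.IsURGPCCWith C) {f : X} {H : Finset ℕ} {n₀ : ℕ}
    (hn₀ : n₀ ∉ H) (hf₀ : b.coord n₀ f = 0) (hH : ∀ n ∈ H, b.coord n f ≤ 0) :
    b.N (f - b.proj H f) ≤ C * b.N f := by
  have key := b.N_sub_proj_le_of_coord_nonneg h (f := -f) hn₀ (by simp [hf₀])
    (fun n hn => by simpa using hH n hn)
  rwa [b.proj_neg, neg_sub_neg, ← neg_sub, b.N_neg, b.N_neg] at key

lemma N_proj_le_sq_of_proj_eq_self (hC : 0 ≤ C) (h : b.IsURGPCCWith C) (A : Finset ℕ)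
    {S : Finset ℕ} {f : X} (hf : b.proj S f = f) : b.N (b.proj A f) ≤ C ^ 2 * b.N f := by
  classical
  obtain ⟨n₀, hn₀⟩ := Infinite.exists_notMem_finset S
  have hf₀ := b.coord_eq_zero_of_proj_eq_self hf hn₀
  set P := (S \ A).filter (fun n => 0 ≤ b.coord n f)
  set Q := (S \ A).filter (fun n => ¬0 ≤ b.coord n f)
  have hPQ : Disjoint Q P := Finset.disjoint_filter_filter_not _ _ _ |>.symm
  have hn₀P : n₀ ∉ P := fun hn => hn₀ (Finset.mem_sdiff.mp (Finset.mem_filter.mp hn).1).1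
  have hn₀Q : n₀ ∉ Q := fun hn => hn₀ (Finset.mem_sdiff.mp (Finset.mem_filter.mp hn).1).1
  set g := f - b.proj P f
  have hgQ : ∀ n ∈ Q, b.coord n g = b.coord n f := fun n hn => by
    simp [g, coord_proj, Finset.disjoint_left.mp hPQ hn]
  have hg : b.N g ≤ C * b.N f :=
    b.N_sub_proj_le_of_coord_nonneg h hn₀P hf₀ fun n hn => (Finset.mem_filter.mp hn).2
  have hgQ_le : b.N (g - b.proj Q g) ≤ C * b.N g :=
    b.N_sub_proj_le_of_coord_nonpos h hn₀Q
      (by simp [g, coord_proj, hn₀P, hf₀])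
      fun n hn => hgQ n hn ▸ le_of_not_ge (Finset.mem_filter.mp hn).2
  have hsplit : g - b.proj Q g = b.proj A f := by
    have hQg : b.proj Q g = b.proj Q f := by
      rw [b.proj_sub, proj_proj, Finset.disjoint_iff_inter_eq_empty.mp hPQ, proj_empty,
        sub_zero]
    have hSA : b.proj (S ∩ A) f + (b.proj P f + b.proj Q f) = f := by
      conv_rhs => rw [← hf]
      simp only [proj, P, Q, Finset.sum_filter_add_sum_filter_not, Finset.sum_inter_add_sum_sdiff]
    have hAf : b.proj A f = b.proj (S ∩ A) f := by
      conv_lhs => rw [← hf]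
      rw [proj_proj, Finset.inter_comm]
    rw [hQg, hAf, eq_sub_of_add_eq hSA]
    simp only [g]
    abel
  calc b.N (b.proj A f) = b.N (g - b.proj Q g) := by rw [hsplit]
    _ ≤ C * (C * b.N f) := hgQ_le.trans (by gcongr)
    _ = C ^ 2 * b.N f := by ring

end Real

end PBasis

theorem URGPCC_implies_unconditional_real_general {X : Type*} [AddCommGroup X] [Module ℝ X]
    {p : ℝ} (hp : 0 < p) (bs : PBasis ℝ X p)
    (Cpgu : ℝ) (hCpgu : 0 < Cpgu) (h : bs.IsURGPCCWith Cpgu) :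
    bs.IsUncondWith (Cpgu ^ 2) := fun A =>
  bs.N_proj_le_of_forall_proj_eq_self hp (sq_nonneg _) A fun _ _ hS =>
    bs.N_proj_le_sq_of_proj_eq_self hCpgu.le h A hS

/-- If a basis of a real `p`-Banach space is `C_pgu`-URGPCC, then it is
unconditional with unconditionality constant `K ≤ C_pgu²`. -/
theorem URGPCC_implies_unconditional_real {X : Type*} [AddCommGroup X] [Module ℝ X]
    {p : ℝ} (hp : 0 < p) (hp1 : p ≤ 1) (bs : PBasis ℝ X p)
    (Cpgu : ℝ) (hCpgu : 0 < Cpgu) (h : bs.IsURGPCCWith Cpgu) :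
    bs.IsUncondWith (Cpgu ^ 2) :=
  URGPCC_implies_unconditional_real_general hp bs Cpgu hCpgu h
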